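/- Every matrix F over Z_q representing the threshold predicate THR_m^1 (disjointness complement: [|S∩T| ≥ 1]) on subsets of [m], with rows ordered by increasing set size and columns ordered so that the i-th column set is the complement of the i-th row set, is upper triangular with all diagonal entries nonzero modulo q. Consequently, if q is a product of k distinct primes, any inner product encoding of THR_m^1 modulo q has length at least 2^m / k. -/

import Mathlib

/-!
A nonzero entry `F S Tᶜ` means `S ⊆ T`, so along an ordering by size `S` comes first or equals
`T`; and `S` is always disjoint from `Sᶜ`.

For the bound, each diagonal value `vx S ⬝ᵥ vy Sᶜ` is nonzero in `ZMod q`, so by the Chinese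
remainder theorem it is nonzero modulo some prime `p j`. This splits the `2 ^ m` sets into `k`
classes. Modulo `p j`, the Gram matrix `(vx S ⬝ᵥ vy Tᶜ)` of one class is triangular with respect
to inclusion with nonzero diagonal, hence invertible, and it factors through `ZMod (p j) ^ ℓ`;
so each class has at most `ℓ` sets.
-/

open Finset Function

namespace Matrix

variable {ι R : Type*} [Fintype ι] [DecidableEq ι]

/-- A permutation `σ ≠ 1` with all `M (σ i) i ≠ 0` would strictly decrease the total weight. -/
theorem det_eq_prod_diag_of_weight_lt [CommRing R] (M : Matrix ι ι R) (w : ι → ℕ)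
    (hw : ∀ i j, i ≠ j → M i j ≠ 0 → w i < w j) : M.det = ∏ i, M i i := by
  rw [det_apply', sum_eq_single (1 : Equiv.Perm ι)]
  · simp
  · intro σ _ hσ
    suffices ∃ i, M (σ i) i = 0 by
      obtain ⟨i, hi⟩ := this
      rw [prod_eq_zero (f := fun j => M (σ j) j) (mem_univ i) hi, mul_zero]
    by_contra! hne
    obtain ⟨i, hi⟩ : ∃ i, σ i ≠ i := by simpa [Equiv.ext_iff] using hσ
    have hlt : ∑ i, w (σ i) < ∑ i, w i := by
      refine sum_lt_sum (fun j _ => ?_) ⟨i, mem_univ i, hw _ _ hi (hne i)⟩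
      by_cases hj : σ j = j
      · rw [hj]
      · exact (hw _ _ hj (hne j)).le
    exact hlt.ne (Equiv.sum_comp σ w)
  · simp

end Matrix

open Matrix in
theorem card_le_of_dotProduct_weight_lt {ι κ K : Type*} [Fintype ι] [DecidableEq ι] [Fintype κ]
    [Field K] (u v : ι → κ → K) (w : ι → ℕ)
    (hw : ∀ i j, i ≠ j → u i ⬝ᵥ v j ≠ 0 → w i < w j) (hdiag : ∀ i, u i ⬝ᵥ v i ≠ 0) :
    Fintype.card ι ≤ Fintype.card κ := by
  let M : Matrix ι ι K := of u * (of v)ᵀ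
  have hM : ∀ i j, M i j = u i ⬝ᵥ v j := fun i j => mul_apply'
  have hdet : M.det ≠ 0 := by
    rw [det_eq_prod_diag_of_weight_lt M w (by simpa only [hM] using hw)]
    exact prod_ne_zero_iff.mpr fun i _ => hM i i ▸ hdiag i
  calc Fintype.card ι = M.rank :=
        (rank_of_isUnit M ((isUnit_iff_isUnit_det M).mpr hdet.isUnit)).symm
    _ ≤ (of u).rank := rank_mul_le_left _ _
    _ ≤ Fintype.card κ := rank_le_card_width _

theorem ZMod.exists_castHom_ne_zero {ι : Type*} [Fintype ι] {p : ι → ℕ}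
    (hp : Pairwise (Nat.Coprime on p)) {x : ZMod (∏ i, p i)} (hx : x ≠ 0) :
    ∃ i, castHom (dvd_prod_of_mem p (mem_univ i)) (ZMod (p i)) x ≠ 0 := by
  have hcrt : prodEquivPi p hp x ≠ 0 := by simpa using hx
  obtain ⟨i, hi⟩ := Function.ne_iff.mp hcrt
  refine ⟨i, ?_⟩
  rwa [Subsingleton.elim (castHom _ (ZMod (p i)))
    ((Pi.evalRingHom _ i).comp (prodEquivPi p hp).toRingHom)]

theorem card_le_of_disjointness_encoding {α κ R K : Type*} [Fintype α] [DecidableEq α]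
    [Fintype κ] [CommRing R] [Field K] (φ : R →+* K) (vx vy : Finset α → κ → R)
    (hv : ∀ S T, vx S ⬝ᵥ vy T ≠ 0 → Disjoint S T) (A : Finset (Finset α))
    (hA : ∀ S ∈ A, φ (vx S ⬝ᵥ vy Sᶜ) ≠ 0) : #A ≤ Fintype.card κ := by
  have hφ : ∀ S T, φ (vx S ⬝ᵥ vy T) = (φ ∘ vx S) ⬝ᵥ (φ ∘ vy T) := fun S T =>
    RingHom.map_dotProduct ..
  have hsub : ∀ S T, φ (vx S ⬝ᵥ vy Tᶜ) ≠ 0 → S ⊆ T := fun S T h =>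
    disjoint_compl_right_iff.mp (hv _ _ fun h0 => h (by rw [h0, map_zero]))
  simpa using card_le_of_dotProduct_weight_lt (ι := A) (fun S => φ ∘ vx S)
    (fun T => φ ∘ vy (T : Finset α)ᶜ) (fun S => #S.1)
    (fun S T hST h => card_lt_card <|
      (hsub _ _ (hφ _ _ ▸ h)).ssubset_of_ne (Subtype.coe_injective.ne hST))
    (fun S => hφ _ _ ▸ hA S S.2)

/-- Every matrix over `ZMod q` representing `THR_m^1` (the predicate `S ∩ T ≠ ∅`), with rows
ordered by nondecreasing set size and column `i` indexed by the complement of the set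
indexing row `i`, is upper triangular with nonzero diagonal; consequently, if `q` is a
product of `k` distinct primes, any inner product encoding of `THR_m^1` modulo `q` has
length at least `2^m / k`. -/
theorem stmt_18 {m k : ℕ} (p : Fin k → ℕ) (hp : ∀ i, (p i).Prime)
    (hinj : Function.Injective p) (q : ℕ) (hq : q = ∏ i, p i) :
    (∀ F : Matrix (Finset (Fin m)) (Finset (Fin m)) (ZMod q),
      (∀ S T : Finset (Fin m), (F S T = 0 ↔ ¬ Disjoint S T)) →
      ∀ e : Fin (2 ^ m) ≃ Finset (Fin m),
        (∀ i j : Fin (2 ^ m), i ≤ j → (e i).card ≤ (e j).card) →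
        (∀ i j : Fin (2 ^ m), j < i → F (e i) ((e j)ᶜ) = 0) ∧
        (∀ i : Fin (2 ^ m), F (e i) ((e i)ᶜ) ≠ 0)) ∧
    (∀ (ℓ : ℕ) (vx vy : Finset (Fin m) → Fin ℓ → ZMod q),
      (∀ S T : Finset (Fin m), ((∑ i, vx S i * vy T i) = 0 ↔ ¬ Disjoint S T)) →
      2 ^ m ≤ k * ℓ) := by
  subst hq
  refine ⟨fun F hF e he => ⟨fun i j hji => ?_, fun i h0 => (hF _ _).mp h0 disjoint_compl_right⟩,
    fun ℓ vx vy hv => ?_⟩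
  · by_contra hne
    have hsub : e i ⊆ e j := disjoint_compl_right_iff.mp (not_not.mp (mt (hF _ _).mpr hne))
    exact hji.ne' (e.injective (eq_of_subset_of_card_le hsub (he j i hji.le)))
  · have hdisj : ∀ S T, vx S ⬝ᵥ vy T ≠ 0 → Disjoint S T := fun S T h =>
      not_not.mp (mt (hv S T).mpr h)
    have hcop : Pairwise (Nat.Coprime on p) := fun i j hij =>
      (Nat.coprime_primes (hp i) (hp j)).mpr (hinj.ne hij)
    choose g hg using fun S => ZMod.exists_castHom_ne_zero hcop
      (fun h => (hv S Sᶜ).mp h disjoint_compl_right)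
    have hclass : ∀ j, #{S | g S = j} ≤ ℓ := fun j => by
      have := Fact.mk (hp j)
      simpa using card_le_of_disjointness_encoding
        (ZMod.castHom (dvd_prod_of_mem p (mem_univ j)) (ZMod (p j))) vx vy hdisj {S | g S = j}
        fun S hS => (mem_filter.mp hS).2 ▸ hg S
    calc 2 ^ m = ∑ j, #{S | g S = j} := by
          simpa using card_eq_sum_card_fiberwise (f := g) (s := univ) (t := univ) (by simp)
      _ ≤ ∑ _j : Fin k, ℓ := sum_le_sum fun j _ => hclass j
      _ = k * ℓ := by simp
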